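/- Fix n ≥ 1, a set Z, Z-hyperimmune sets B₀, …, B_{n−1}, and a non-trivial partition A₀ ∪ … ∪ A_n = ℕ. For every condition (F, X) and every p ∈ ℕ, there exist a condition (E, Y) extending (F, X) and integers m₀, …, m_n > p such that m_i ∈ E \ A_i for each i ≤ n. -/

import Mathlib

/-!
If `X \ A i` were finite for some `i`, then `X ∩ A i` would differ from `X` by a finite set,
so `(X ∩ A i) ⊕ Z` would be computable from `X ⊕ Z` and every `B j` would stay hyperimmune
relative to it; as `X ∩ A i` is infinite and misses every other part, this contradicts
non-triviality. Hence each `X \ A i` is infinite and contains some `m i > p`; adding these to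
`F` and cutting the reservoir above them gives the required extension, again by a finite
modification of `X`.
-/

open Classical in
/-- The characteristic function of a set of naturals. -/
noncomputable def chi (Z : Set ℕ) : ℕ → ℕ := fun n => if n ∈ Z then 1 else 0

/-- Partial functions `ℕ →. ℕ` recursive in an oracle `O : ℕ → ℕ`. -/
inductive OracleRecursiveIn (O : ℕ → ℕ) : (ℕ →. ℕ) → Prop
  | zero : OracleRecursiveIn O (pure 0)
  | succ : OracleRecursiveIn O ↑Nat.succ
  | left : OracleRecursiveIn O ↑fun n : ℕ => n.unpair.1
  | right : OracleRecursiveIn O ↑fun n : ℕ => n.unpair.2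
  | oracle : OracleRecursiveIn O ↑O
  | pair {f g} : OracleRecursiveIn O f → OracleRecursiveIn O g →
      OracleRecursiveIn O fun n => Nat.pair <$> f n <*> g n
  | comp {f g} : OracleRecursiveIn O f → OracleRecursiveIn O g →
      OracleRecursiveIn O fun n => g n >>= f
  | prec {f g} : OracleRecursiveIn O f → OracleRecursiveIn O g →
      OracleRecursiveIn O (Nat.unpaired fun a n =>
        n.rec (f a) fun y IH => do let i ← IH; g (Nat.pair a (Nat.pair y i)))
  | rfind {f} : OracleRecursiveIn O f →
      OracleRecursiveIn O fun a => Nat.rfind fun n => (fun m => m = 0) <$> f (Nat.pair a n)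

/-- `f : ℕ → ℕ` is computable relative to (the characteristic function of) `Z`. -/
def FunComputableIn (Z : Set ℕ) (f : ℕ → ℕ) : Prop := OracleRecursiveIn (chi Z) f

/-- The set `S` is computable relative to `Z`. -/
def SetComputableIn (Z S : Set ℕ) : Prop := FunComputableIn Z (chi S)

/-- The set `W` is computably enumerable relative to `Z`. -/
def CeIn (Z W : Set ℕ) : Prop := ∃ g : ℕ →. ℕ, OracleRecursiveIn (chi Z) g ∧ W = g.Dom

/-- The join `X ⊕ Z = {2n : n ∈ X} ∪ {2n+1 : n ∈ Z}`. -/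
def join (X Z : Set ℕ) : Set ℕ :=
  {k | (∃ n ∈ X, k = 2 * n) ∨ (∃ n ∈ Z, k = 2 * n + 1)}

/-- `D k` is the finite set of naturals with canonical code `k`. -/
def D (k : ℕ) : Finset ℕ := Denumerable.ofNat (Finset ℕ) k

/-- `B` is `Z`-hyperimmune: every `Z`-c.e. array `(D (f i))_{i}` of pairwise disjoint
finite sets has a member disjoint from `B`. -/
def Hyperimmune (Z B : Set ℕ) : Prop :=
  ∀ f : ℕ → ℕ, FunComputableIn Z f →
    (∀ i j, i ≠ j → Disjoint (D (f i)) (D (f j))) →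
    ∃ i, ∀ x ∈ D (f i), x ∉ B

/-- A Mathias condition `(F, X)`: `F` finite, `X` infinite and `max F < min X`. -/
def MathiasCond (F : Finset ℕ) (X : Set ℕ) : Prop :=
  X.Infinite ∧ ∀ a ∈ F, ∀ b ∈ X, a < b

/-- `(E, Y)` extends `(F, X)`. -/
def MathiasExtends (E : Finset ℕ) (Y : Set ℕ) (F : Finset ℕ) (X : Set ℕ) : Prop :=
  F ⊆ E ∧ Y ⊆ X ∧ ↑(E \ F) ⊆ X

/-- A set `G` satisfies the Mathias condition `(F, X)`. -/
def SatisfiesCond (G : Set ℕ) (F : Finset ℕ) (X : Set ℕ) : Prop :=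
  ↑F ⊆ G ∧ G ⊆ ↑F ∪ X

/-- The partition `A 0 ∪ … ∪ A n = ℕ` is non-trivial (relative to `Z` and the
`B j`'s): there is no infinite set `H` avoiding some part `A i` such that every
`B j` is `(H ⊕ Z)`-hyperimmune. -/
def NonTrivial (n : ℕ) (Z : Set ℕ) (B : Fin n → Set ℕ)
    (A : Fin (n + 1) → Set ℕ) : Prop :=
  ¬ ∃ H : Set ℕ, H.Infinite ∧ (∃ i : Fin (n + 1), H ∩ A i = ∅) ∧
      ∀ j, Hyperimmune (join H Z) (B j)

/-- A condition: a Mathias condition `(F, X)` whose reservoir preserves all the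
hyperimmunities. -/
def PCond (n : ℕ) (Z : Set ℕ) (B : Fin n → Set ℕ)
    (F : Finset ℕ) (X : Set ℕ) : Prop :=
  MathiasCond F X ∧ ∀ j, Hyperimmune (join X Z) (B j)

namespace OracleRecursiveIn

variable {O : ℕ → ℕ}

theorem of_partrec {f : ℕ →. ℕ} (hf : Nat.Partrec f) : OracleRecursiveIn O f := by
  induction hf with
  | zero => exact .zero
  | succ => exact .succ
  | left => exact .left
  | right => exact .right
  | pair _ _ ih₁ ih₂ => exact .pair ih₁ ih₂
  | comp _ _ ih₁ ih₂ => exact .comp ih₁ ih₂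
  | prec _ _ ih₁ ih₂ => exact .prec ih₁ ih₂
  | rfind _ ih => exact .rfind ih

theorem of_eq {f g : ℕ →. ℕ} (hf : OracleRecursiveIn O f) (h : ∀ n, f n = g n) :
    OracleRecursiveIn O g :=
  funext h ▸ hf

theorem of_primrec {f : ℕ → ℕ} (hf : Primrec f) : OracleRecursiveIn O f :=
  of_partrec (Partrec.nat_iff.mp hf.to_comp)

theorem trans {O' : ℕ → ℕ} (hO' : OracleRecursiveIn O O') {f : ℕ →. ℕ}
    (hf : OracleRecursiveIn O' f) : OracleRecursiveIn O f := by
  induction hf with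
  | zero => exact .zero
  | succ => exact .succ
  | left => exact .left
  | right => exact .right
  | oracle => exact hO'
  | pair _ _ ih₁ ih₂ => exact .pair ih₁ ih₂
  | comp _ _ ih₁ ih₂ => exact .comp ih₁ ih₂
  | prec _ _ ih₁ ih₂ => exact .prec ih₁ ih₂
  | rfind _ ih => exact .rfind ih

theorem primrec_comp_pair_oracle {g : ℕ → ℕ} (hg : Primrec g) :
    OracleRecursiveIn O ↑fun n => g (Nat.pair n (O n)) :=
  (comp (of_primrec hg) (pair (of_primrec Primrec.id) oracle)).of_eq fun n => by
    simp only [Seq.seq, PFun.coe_val, id_eq, Part.map_eq_map, Part.map_some, Part.bind_some]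
    exact Part.bind_some _ _

theorem ite_mem_finset (T : Finset ℕ) :
    OracleRecursiveIn O ↑fun n => if n ∈ T then 0 else O n := by
  have hT : PrimrecPred (· ∈ T) :=
    ((PrimrecRel.exists_mem_list Primrec.eq).comp (Primrec.const T.toList) Primrec.id).of_eq
      fun n => by simp
  have hg : Primrec fun m : ℕ => if m.unpair.1 ∈ T then 0 else m.unpair.2 :=
    Primrec.ite (hT.comp (Primrec.fst.comp Primrec.unpair)) (Primrec.const 0)
      (Primrec.snd.comp Primrec.unpair)
  exact (primrec_comp_pair_oracle hg).of_eq fun n => by simp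

end OracleRecursiveIn

open Classical in
theorem chi_sdiff_finset (W : Set ℕ) (T : Finset ℕ) :
    chi (W \ ↑T) = fun n => if n ∈ T then 0 else chi W n := by
  funext n
  by_cases hn : n ∈ T <;> simp [chi, hn]

theorem join_sdiff (X S Z : Set ℕ) : join (X \ S) Z = join X Z \ (2 * ·) '' S := by
  ext k
  simp only [join, Set.mem_sdiff, Set.mem_ofPred_eq, Set.mem_image]
  constructor
  · rintro (⟨a, ⟨haX, haS⟩, rfl⟩ | ⟨a, haZ, rfl⟩)
    · refine ⟨Or.inl ⟨a, haX, rfl⟩, ?_⟩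
      rintro ⟨b, hbS, hba⟩
      obtain rfl : b = a := by omega
      exact haS hbS
    · exact ⟨Or.inr ⟨a, haZ, rfl⟩, fun ⟨b, _, hba⟩ => by omega⟩
  · rintro ⟨⟨a, haX, rfl⟩ | ⟨a, haZ, rfl⟩, hk⟩
    · exact Or.inl ⟨a, ⟨haX, fun haS => hk ⟨a, haS, rfl⟩⟩, rfl⟩
    · exact Or.inr ⟨a, haZ, rfl⟩

theorem Hyperimmune.of_recursiveIn {Z Z' B : Set ℕ}
    (hZ : OracleRecursiveIn (chi Z') ↑(chi Z)) (h : Hyperimmune Z' B) : Hyperimmune Z B :=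
  fun f hf hdisj => h f (hZ.trans hf) hdisj

theorem Hyperimmune.join_sdiff_finite {X Z B S : Set ℕ} (hS : S.Finite)
    (h : Hyperimmune (join X Z) B) : Hyperimmune (join (X \ S) Z) B := by
  refine h.of_recursiveIn ?_
  have hS' : (2 * ·) '' S = ↑((hS.image (2 * ·)).toFinset) := by simp
  rw [join_sdiff, hS', chi_sdiff_finset]
  exact OracleRecursiveIn.ite_mem_finset _

theorem NonTrivial.infinite_sdiff {n : ℕ} (hn : 1 ≤ n) {Z : Set ℕ} {B : Fin n → Set ℕ}
    {A : Fin (n + 1) → Set ℕ} (hnt : NonTrivial n Z B A)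
    (hdisj : ∀ i j : Fin (n + 1), i ≠ j → A i ∩ A j = ∅) {X : Set ℕ} (hX : X.Infinite)
    (hXB : ∀ j, Hyperimmune (join X Z) (B j)) (i : Fin (n + 1)) : (X \ A i).Infinite := by
  by_contra hfin
  rw [Set.not_infinite] at hfin
  have : Nontrivial (Fin (n + 1)) := Fin.nontrivial_iff_two_le.mpr (by omega)
  obtain ⟨j, hji⟩ := exists_ne i
  have hXA : X \ (X \ A i) = X ∩ A i := Set.sdiff_sdiff_right_self _ _
  refine hnt ⟨X ∩ A i, ?_, ⟨j, ?_⟩, fun k => ?_⟩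
  · exact hXA ▸ hX.sdiff hfin
  · rw [Set.inter_assoc, Set.inter_comm, hdisj i j hji.symm, Set.empty_inter]
  · exact hXA ▸ (hXB k).join_sdiff_finite hfin

theorem PCond.exists_extends_union {n : ℕ} {Z : Set ℕ} {B : Fin n → Set ℕ} {F : Finset ℕ}
    {X : Set ℕ} (hFX : PCond n Z B F X) {M : Finset ℕ} (hMX : ↑M ⊆ X) :
    ∃ Y, PCond n Z B (F ∪ M) Y ∧ MathiasExtends (F ∪ M) Y F X := by
  set N := (F ∪ M).sup id
  refine ⟨X \ Set.Iic N, ⟨⟨hFX.1.1.sdiff (Set.finite_Iic N), fun a ha b hb => ?_⟩,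
    fun j => (hFX.2 j).join_sdiff_finite (Set.finite_Iic N)⟩,
    Finset.subset_union_left, Set.sdiff_subset, ?_⟩
  · exact lt_of_le_of_lt (Finset.le_sup (f := id) ha) (not_le.mp hb.2)
  · intro x hx
    simp only [Finset.coe_sdiff, Set.mem_sdiff, Finset.coe_union, Set.mem_union,
      Finset.mem_coe] at hx
    exact hMX (hx.1.resolve_left hx.2)

theorem stmt15_general (n : ℕ) (hn : 1 ≤ n) (Z : Set ℕ)
    (B : Fin n → Set ℕ)
    (A : Fin (n + 1) → Set ℕ)
    (hdisj : ∀ i j : Fin (n + 1), i ≠ j → A i ∩ A j = ∅)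
    (hnt : NonTrivial n Z B A)
    (F : Finset ℕ) (X : Set ℕ) (hFX : PCond n Z B F X) (p : ℕ) :
    ∃ (E : Finset ℕ) (Y : Set ℕ), PCond n Z B E Y ∧ MathiasExtends E Y F X ∧
      ∃ m : Fin (n + 1) → ℕ, ∀ i : Fin (n + 1),
        p < m i ∧ m i ∈ E ∧ m i ∉ A i := by
  choose m hmA hpm using fun i => (hnt.infinite_sdiff hn hdisj hFX.1.1 hFX.2 i).exists_gt p
  have hmX : ↑(Finset.univ.image m) ⊆ X := by
    simpa [Set.range_subset_iff] using fun i => (hmA i).1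
  obtain ⟨Y, hY, hext⟩ := hFX.exists_extends_union hmX
  refine ⟨_, Y, hY, hext, m, fun i => ⟨hpm i, ?_, (hmA i).2⟩⟩
  exact Finset.mem_union_right _ (Finset.mem_image_of_mem m (Finset.mem_univ i))

/-- Forcing limitlessness: every condition can be extended so as to capture, above
any threshold `p`, an element outside each part `A i` of a non-trivial partition. -/
theorem stmt15 (n : ℕ) (hn : 1 ≤ n) (Z : Set ℕ)
    (B : Fin n → Set ℕ) (hB : ∀ j, Hyperimmune Z (B j))
    (A : Fin (n + 1) → Set ℕ)
    (hdisj : ∀ i j : Fin (n + 1), i ≠ j → A i ∩ A j = ∅)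
    (hcover : (⋃ i, A i) = Set.univ)
    (hnt : NonTrivial n Z B A)
    (F : Finset ℕ) (X : Set ℕ) (hFX : PCond n Z B F X) (p : ℕ) :
    ∃ (E : Finset ℕ) (Y : Set ℕ), PCond n Z B E Y ∧ MathiasExtends E Y F X ∧
      ∃ m : Fin (n + 1) → ℕ, ∀ i : Fin (n + 1),
        p < m i ∧ m i ∈ E ∧ m i ∉ A i :=
  stmt15_general n hn Z B A hdisj hnt F X hFX p
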